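/- arXiv:2010.01175 — 2 statements merged into one kernel-verified Lean document; each statement's English description precedes it below -/
import Mathlib

section
/- Let q ≥ 2 and d ≥ 1 and let C be a finite set of at least two clients, each client i holding a vector g_i ∈ (ZMod q)^d. If pairwise masks u_{ij} for i < j are sampled independently and uniformly from (ZMod q)^d and u_{ji} is defined as -u_{ij}, then the joint distribution of the masked vectors (g_i + Σ_{j≠i} u_{ij})_{i∈C} is exactly the uniform distribution on the set of tuples (v_i)_{i∈C} in ((ZMod q)^d)^C satisfying Σ_{i∈C} v_i = Σ_{i∈C} g_i. -/
open scoped BigOperators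

set_option linter.unusedSectionVars false

namespace SecAggAux

variable (q d n : ℕ) [NeZero q]

def T (u : {p : Fin n × Fin n // p.1 < p.2} → (Fin d → ZMod q)) :
    Fin n → Fin d → ZMod q :=
  fun i => ∑ p : {p : Fin n × Fin n // p.1 < p.2},
    ((if p.1.1 = i then u p else 0) - (if p.1.2 = i then u p else 0))

variable {q d n}

lemma T_sub (u v : {p : Fin n × Fin n // p.1 < p.2} → (Fin d → ZMod q)) :
    T q d n (u - v) = T q d n u - T q d n v := by
  funext i
  simp only [T, Pi.sub_apply]
  rw [← Finset.sum_sub_distrib]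
  refine Finset.sum_congr rfl fun p _ => ?_
  split_ifs <;> abel

lemma T_add (u v : {p : Fin n × Fin n // p.1 < p.2} → (Fin d → ZMod q)) :
    T q d n (u + v) = T q d n u + T q d n v := by
  have h := T_sub (u + v) v
  simp only [add_sub_cancel_right] at h
  rw [h]
  abel

lemma T_zero : T q d n (0 : {p : Fin n × Fin n // p.1 < p.2} → (Fin d → ZMod q)) = 0 := by
  funext i; simp [T]

lemma sum_T (u : {p : Fin n × Fin n // p.1 < p.2} → (Fin d → ZMod q)) :
    ∑ i, T q d n u i = 0 := by
  unfold T
  rw [Finset.sum_comm]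
  simp [Finset.sum_sub_distrib, Finset.sum_ite_eq]

lemma sum_subP (F : Fin n × Fin n → Fin d → ZMod q) :
    ∑ p : {p : Fin n × Fin n // p.1 < p.2}, F p.1
      = ∑ a : Fin n, ∑ b : Fin n, if a < b then F (a, b) else 0 := by
  classical
  rw [show (∑ a : Fin n, ∑ b : Fin n, if a < b then F (a, b) else 0)
      = ∑ p : Fin n × Fin n, if p.1 < p.2 then F p else 0 from
    (Fintype.sum_prod_type (fun p : Fin n × Fin n => if p.1 < p.2 then F p else 0)).symm]
  rw [← Finset.sum_filter]
  exact (Finset.sum_subtype (p := fun p : Fin n × Fin n => p.1 < p.2)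
    (Finset.univ.filter fun p : Fin n × Fin n => p.1 < p.2) (fun x => by simp) F).symm

lemma T_surj (hn : 2 ≤ n) (w : Fin n → Fin d → ZMod q) (hw : ∑ i, w i = 0) :
    ∃ u, T q d n u = w := by
  haveI : NeZero n := ⟨by omega⟩
  refine ⟨fun p => if p.1.1 = 0 then -(w p.1.2) else 0, ?_⟩
  funext i
  show (∑ p : {p : Fin n × Fin n // p.1 < p.2},
    ((if p.1.1 = i then (if p.1.1 = 0 then -(w p.1.2) else 0) else 0)
      - (if p.1.2 = i then (if p.1.1 = 0 then -(w p.1.2) else 0) else 0))) = w i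
  refine Eq.trans (sum_subP (fun r : Fin n × Fin n =>
      ((if r.1 = i then (if r.1 = 0 then -(w r.2) else 0) else 0)
      - (if r.2 = i then (if r.1 = 0 then -(w r.2) else 0) else 0)))) ?_
  have hsum0 : ∑ b : Fin n, (-(w b) + if b = 0 then w b else 0) = w 0 := by
    rw [Finset.sum_add_distrib, Finset.sum_ite_eq' Finset.univ (0 : Fin n) w,
      if_pos (Finset.mem_univ _), Finset.sum_neg_distrib, hw]
    simp
  by_cases hi : i = 0
  · subst hi
    rw [Finset.sum_eq_single_of_mem 0 (Finset.mem_univ _)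
      (fun a _ ha => by
        refine Finset.sum_eq_zero fun b _ => ?_
        split_ifs <;> simp_all)]
    refine Eq.trans (Finset.sum_congr rfl fun b _ => ?_) hsum0
    rcases eq_or_ne b 0 with rfl | hb
    · simp
    · simp [hb, (Fin.pos_iff_ne_zero' b).mpr hb]
  · have hi' : (0 : Fin n) < i := (Fin.pos_iff_ne_zero' i).mpr hi
    have key : ∀ a b : Fin n,
        (if a < b then
          ((if a = i then (if a = 0 then -(w b) else 0) else 0)
            - (if b = i then (if a = 0 then -(w b) else 0) else 0)) else 0)
        = (if a = 0 then (if b = i then w b else 0) else 0) := by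
      intro a b
      split_ifs <;> simp_all
    simp only [key]
    simp [Finset.sum_ite_eq']

end SecAggAux

open SecAggAux
open scoped ENNReal

/-- Secure aggregation masking: the joint law of the masked updates equals the
uniform law on the coset of tuples with the same sum. -/
theorem stmt_0 (q d n : ℕ) [NeZero q] (hq : 2 ≤ q) (hd : 1 ≤ d) (hn : 2 ≤ n)
    (g : Fin n → Fin d → ZMod q) :
    (PMF.uniformOfFintype ({p : Fin n × Fin n // p.1 < p.2} → (Fin d → ZMod q))).map
        (fun u i => g i + ∑ p : {p : Fin n × Fin n // p.1 < p.2},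
          ((if p.1.1 = i then u p else 0) - (if p.1.2 = i then u p else 0)))
      = PMF.uniformOfFinset
          (Finset.univ.filter fun v : Fin n → Fin d → ZMod q => ∑ i, v i = ∑ i, g i)
          ⟨g, Finset.mem_filter.mpr ⟨Finset.mem_univ g, rfl⟩⟩ := by
  classical
  set α := ({p : Fin n × Fin n // p.1 < p.2} → (Fin d → ZMod q)) with hα
  set f : α → (Fin n → Fin d → ZMod q) := fun u i => g i + T q d n u i with hf
  set s : Finset (Fin n → Fin d → ZMod q) :=
    Finset.univ.filter fun v : Fin n → Fin d → ZMod q => ∑ i, v i = ∑ i, g i with hs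
  -- every masked vector lands in s
  have hmem : ∀ u : α, f u ∈ s := by
    intro u
    simp only [hs, Finset.mem_filter, Finset.mem_univ, true_and, hf]
    rw [Finset.sum_add_distrib, sum_T, add_zero]
  -- fibers over points of s all have the kernel's cardinality
  set c : ℕ := (Finset.univ.filter fun u : α => T q d n u = 0).card with hc
  have hcpos : 0 < c := by
    rw [hc]
    refine Finset.card_pos.mpr ⟨0, ?_⟩
    simp [T_zero]
  have hfiber : ∀ b ∈ s, (Finset.univ.filter fun u : α => f u = b).card = c := by
    intro b hb
    have hb' : ∑ i, (b - g) i = 0 := by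
      simp only [hs, Finset.mem_filter] at hb
      simp only [Pi.sub_apply]
      rw [Finset.sum_sub_distrib, hb.2, sub_self]
    obtain ⟨u₀, hu₀⟩ := T_surj hn (b - g) hb'
    rw [hc]
    refine Finset.card_bij' (fun u _ => u - u₀) (fun u _ => u + u₀) ?_ ?_ ?_ ?_
    · intro u hu
      simp only [Finset.mem_filter, Finset.mem_univ, true_and] at hu ⊢
      have : T q d n u = b - g := by
        funext i
        have := congrFun hu i
        simp only [hf] at this
        simpa [eq_sub_iff_add_eq, add_comm] using this
      rw [T_sub, this, hu₀, sub_self]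
    · intro u hu
      simp only [Finset.mem_filter, Finset.mem_univ, true_and] at hu ⊢
      funext i
      simp only [hf]
      rw [show (T q d n (u + u₀)) = T q d n u + T q d n u₀ from T_add u u₀,
        hu, hu₀]
      simp
    · intro u _; simp
    · intro u _; simp
  -- total count
  have htot : Fintype.card α = s.card * c := by
    rw [← Finset.card_univ, Finset.card_eq_sum_card_fiberwise (fun u _ => hmem u),
      Finset.sum_congr rfl hfiber, Finset.sum_const, smul_eq_mul]
  -- pointwise equality of the two PMFs
  ext b
  rw [show (fun (u : α) i => g i + ∑ p : {p : Fin n × Fin n // p.1 < p.2},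
      ((if p.1.1 = i then u p else 0) - (if p.1.2 = i then u p else 0)))
    = f from rfl]
  rw [PMF.map_apply]
  erw [PMF.uniformOfFinset_apply]
  simp only [PMF.uniformOfFintype_apply, tsum_fintype]
  have hflip : (Finset.univ.filter fun u : α => b = f u)
      = (Finset.univ.filter fun u : α => f u = b) := by
    apply Finset.filter_congr
    intro u _
    exact eq_comm
  rw [← Finset.sum_filter, Finset.sum_const, nsmul_eq_mul, hflip]
  by_cases hb : b ∈ s
  · rw [if_pos hb, hfiber b hb, htot]
    have hcne : (c : ℝ≥0∞) ≠ 0 := Nat.cast_ne_zero.mpr hcpos.ne'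
    push_cast
    rw [ENNReal.mul_inv (Or.inr (ENNReal.natCast_ne_top c))
      (Or.inl (ENNReal.natCast_ne_top _))]
    rw [mul_comm ((s.card : ℝ≥0∞))⁻¹ ((c : ℝ≥0∞))⁻¹, ← mul_assoc,
      ENNReal.mul_inv_cancel hcne (ENNReal.natCast_ne_top c), one_mul]
  · rw [if_neg hb]
    have hempty : (Finset.univ.filter fun u : α => f u = b) = ∅ := by
      refine Finset.filter_false_of_mem fun u _ h => hb (h ▸ hmem u)
    simp [hempty]
end

section
/- Let D ⊆ ℝ^d be a finite nonempty set with mean μ and covariance matrix Σ satisfying ‖Σ‖_op ≤ σ². If S ⊆ D is any subset with |S| ≥ (1−ε)|D| for some 0 ≤ ε < 1, then the mean μ_S of S satisfies ‖μ_S − μ‖₂ ≤ σ √(ε/(1−ε)). -/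
open scoped BigOperators

set_option maxHeartbeats 1000000 in
/-- Deleting an ε-fraction of points of a bounded-covariance dataset moves
the empirical mean by at most σ√(ε/(1−ε)). -/
theorem stmt_7 (d : ℕ) (D : Finset (EuclideanSpace ℝ (Fin d))) (hD : D.Nonempty)
    (μ : EuclideanSpace ℝ (Fin d)) (hμ : μ = (D.card : ℝ)⁻¹ • ∑ x ∈ D, x)
    (σ : ℝ) (hσ : 0 ≤ σ)
    (hcov : ∀ v : EuclideanSpace ℝ (Fin d), ‖v‖ = 1 →
      (D.card : ℝ)⁻¹ * ∑ x ∈ D, (inner ℝ v (x - μ) : ℝ) ^ 2 ≤ σ ^ 2)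
    (ε : ℝ) (hε0 : 0 ≤ ε) (hε1 : ε < 1)
    (S : Finset (EuclideanSpace ℝ (Fin d))) (hS : S ⊆ D)
    (hcard : (1 - ε) * D.card ≤ S.card) :
    ‖(S.card : ℝ)⁻¹ • ∑ x ∈ S, x - μ‖ ≤ σ * Real.sqrt (ε / (1 - ε)) := by
  have hn : 0 < (D.card : ℝ) := by exact_mod_cast Finset.card_pos.mpr hD
  have h1ε : 0 < 1 - ε := by linarith
  have hs : 0 < (S.card : ℝ) := lt_of_lt_of_le (by positivity) hcard
  set w : EuclideanSpace ℝ (Fin d) := (S.card : ℝ)⁻¹ • ∑ x ∈ S, x - μ with hwdef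
  have hrhs : 0 ≤ σ * Real.sqrt (ε / (1 - ε)) := by positivity
  by_cases hw0 : w = 0
  · rw [hw0]; simpa using hrhs
  have hnw : 0 < ‖w‖ := norm_pos_iff.mpr hw0
  set v : EuclideanSpace ℝ (Fin d) := ‖w‖⁻¹ • w with hvdef
  have hvnorm : ‖v‖ = 1 := by
    rw [hvdef, norm_smul, norm_inv, norm_norm, inv_mul_cancel₀ hnw.ne']
  set f : EuclideanSpace ℝ (Fin d) → ℝ := fun x => (inner ℝ v (x - μ) : ℝ) with hfdef
  classical
  have hsumF : ∀ F : Finset (EuclideanSpace ℝ (Fin d)),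
      ∑ x ∈ F, f x = (inner ℝ v (∑ x ∈ F, x - (F.card : ℝ) • μ) : ℝ) := by
    intro F
    have h : (∑ x ∈ F, x) - (F.card : ℝ) • μ = ∑ x ∈ F, (x - μ) := by
      rw [Finset.sum_sub_distrib, Finset.sum_const, ← Nat.cast_smul_eq_nsmul ℝ]
    rw [h, inner_sum]
  -- sum over S
  have hA : ∑ x ∈ S, f x = (S.card : ℝ) * ‖w‖ := by
    rw [hsumF S]
    have h1 : (∑ x ∈ S, x) - (S.card : ℝ) • μ = (S.card : ℝ) • w := by
      rw [hwdef, smul_sub, smul_inv_smul₀ hs.ne']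
    rw [h1, real_inner_smul_right, hvdef, real_inner_smul_left,
      real_inner_self_eq_norm_sq]
    field_simp
  -- sum over D is zero
  have hDsum : ∑ x ∈ D, f x = 0 := by
    rw [hsumF D]
    have : (∑ x ∈ D, x) = (D.card : ℝ) • μ := by
      rw [hμ, smul_inv_smul₀ hn.ne']
    rw [this, sub_self, inner_zero_right]
  set T : Finset (EuclideanSpace ℝ (Fin d)) := D \ S with hTdef
  have hsplit : ∑ x ∈ T, f x + ∑ x ∈ S, f x = ∑ x ∈ D, f x :=
    Finset.sum_sdiff hS
  have hsplit2 : ∑ x ∈ T, (f x) ^ 2 + ∑ x ∈ S, (f x) ^ 2 = ∑ x ∈ D, (f x) ^ 2 :=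
    Finset.sum_sdiff hS
  have hB : ∑ x ∈ T, f x = -((S.card : ℝ) * ‖w‖) := by
    rw [← hA]; linarith [hsplit, hDsum]
  have htcard : (T.card : ℝ) = (D.card : ℝ) - (S.card : ℝ) := by
    rw [hTdef]
    rw [Finset.card_sdiff_of_subset hS]
    have := Finset.card_le_card hS
    push_cast [Nat.cast_sub this]
    ring
  clear_value w v f T
  -- Cauchy-Schwarz on S and T
  have hCS_S : (∑ x ∈ S, f x) ^ 2 ≤ (S.card : ℝ) * ∑ x ∈ S, (f x) ^ 2 := by
    have := sq_sum_le_card_mul_sum_sq (s := S) (f := f)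
    exact_mod_cast this
  have hCS_T : (∑ x ∈ T, f x) ^ 2 ≤ (T.card : ℝ) * ∑ x ∈ T, (f x) ^ 2 := by
    have := sq_sum_le_card_mul_sum_sq (s := T) (f := f)
    exact_mod_cast this
  -- covariance bound
  have hQ : ∑ x ∈ D, (f x) ^ 2 ≤ (D.card : ℝ) * σ ^ 2 := by
    have h := hcov v hvnorm
    rw [inv_mul_le_iff₀ hn] at h
    simp only [hfdef]
    linarith [h]
  have hQS : 0 ≤ ∑ x ∈ S, (f x) ^ 2 := Finset.sum_nonneg fun x _ => sq_nonneg _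
  have hQT : 0 ≤ ∑ x ∈ T, (f x) ^ 2 := Finset.sum_nonneg fun x _ => sq_nonneg _
  have ht0 : 0 ≤ (T.card : ℝ) := Nat.cast_nonneg _
  -- derive a² ≤ s t σ²
  have key : ((S.card : ℝ) * ‖w‖) ^ 2 ≤ (S.card : ℝ) * (T.card : ℝ) * σ ^ 2 := by
    have h1 : ((S.card : ℝ) * ‖w‖) ^ 2 ≤ (S.card : ℝ) * ∑ x ∈ S, (f x) ^ 2 := by
      rw [← hA]; exact hCS_S
    have h2 : ((S.card : ℝ) * ‖w‖) ^ 2 ≤ (T.card : ℝ) * ∑ x ∈ T, (f x) ^ 2 := by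
      have := hCS_T; rw [hB] at this; simpa [neg_sq] using this
    have hQ' : ∑ x ∈ T, (f x) ^ 2 + ∑ x ∈ S, (f x) ^ 2 ≤ (D.card : ℝ) * σ ^ 2 := by
      rw [hsplit2]; exact hQ
    have h1t := mul_le_mul_of_nonneg_left h1 ht0
    have h2s := mul_le_mul_of_nonneg_left h2 hs.le
    have h3 := mul_le_mul_of_nonneg_left hQ' (mul_nonneg hs.le ht0)
    set a : ℝ := (S.card : ℝ) * ‖w‖ with hadef
    set QS : ℝ := ∑ x ∈ S, (f x) ^ 2 with hQSdef
    set QT : ℝ := ∑ x ∈ T, (f x) ^ 2 with hQTdef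
    clear_value a QS QT
    nlinarith [h1t, h2s, h3, hn, htcard, hs, ht0]
  have hts : (T.card : ℝ) * (1 - ε) ≤ ε * (S.card : ℝ) := by
    rw [htcard]
    have h := hcard
    ring_nf
    ring_nf at h
    linarith
  have k2 : (S.card : ℝ) * ‖w‖ ^ 2 ≤ (T.card : ℝ) * σ ^ 2 := by
    nlinarith [key, hs]
  have hw2 : ‖w‖ ^ 2 ≤ σ ^ 2 * (ε / (1 - ε)) := by
    rw [mul_div_assoc', le_div_iff₀ h1ε]
    nlinarith [k2, hts, hs, sq_nonneg σ, h1ε]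
  calc ‖w‖ = Real.sqrt (‖w‖ ^ 2) := by rw [Real.sqrt_sq (norm_nonneg w)]
    _ ≤ Real.sqrt (σ ^ 2 * (ε / (1 - ε))) := Real.sqrt_le_sqrt hw2
    _ = σ * Real.sqrt (ε / (1 - ε)) := by
        rw [Real.sqrt_mul (sq_nonneg σ), Real.sqrt_sq hσ]
end
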